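/- arXiv:math/0405278 — 2 statements merged into one kernel-verified Lean document; each statement's English description precedes it below -/
import Mathlib

section
/- Abstract perturbation theorem: let B⁰ ⊇ B¹ ⊇ … ⊇ B^s be Banach spaces, {L_t} a family of bounded operators on each B^i satisfying: (a) ‖L_tⁿ‖_{B⁰} ≤ C Mⁿ; (b) ‖L_tⁿ f‖_{B¹} ≤ C αⁿ ‖f‖_{B¹} + C Mⁿ ‖f‖_{B⁰} with α < M; (c) there exist operators Q_1,…,Q_{s−1} with ‖Q_j‖_{B^i→B^{i−j}} ≤ C for j ≤ i ≤ s; (d) setting Δ_j(t) := L_t − L_0 − Σ_{k=1}^{j−1} t^k Q_k, one has ‖Δ_j(t)‖_{B^i→B^{i−j}} ≤ C|t|^j for 0 ≤ j ≤ s, j ≤ i ≤ s. Assume also the Keller–Liverani estimate ‖(z−L_t)⁻¹ − (z−L_0)⁻¹‖_{B¹→B⁰} ≤ C|t|^η, where η = log(ϱ/α)/log(M/α). Then for z with |z| ≥ ϱ at distance ≥ δ from the spectrum of L_0 on every B^k (1 ≤ k ≤ s) and t small, ‖(z−L_t)⁻¹ − R_s(t)‖_{B^s→B⁰} ≤ C|t|^{s−1+η},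 where R_s(t) := Σ_{k=0}^{s−1} t^k Σ_{ℓ_1+⋯+ℓ_j = k} (z−L_0)⁻¹ Q_{ℓ_1}(z−L_0)⁻¹ ⋯ (z−L_0)⁻¹ Q_{ℓ_j}(z−L_0)⁻¹. -/
/-!
Write `R = (z - L₀)⁻¹`, `Rₜ = (z - Lₜ)⁻¹`, `Pₙ` for the Taylor polynomial `R_n(t)` and `Δₙ` for the
Taylor remainder of `Lₜ` of order `n`. Splitting off the last factor `Q_m R` of each word in `Pₙ`
gives `P_{n+1} = R + ∑_{1 ≤ m ≤ n} t^m P_{n+1-m} Q_m R`; combined with the resolvent identity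
`Rₜ - R = Rₜ (Lₜ - L₀) R` and `Lₜ - L₀ = ∑_{m<n} t^m Q_m + Δₙ` this yields
`Rₜ - P_{n+1} = ∑_{1 ≤ m < n} t^m (Rₜ - P_{n+1-m}) Q_m R + (Rₜ - R) Δₙ R + R Δ_{n+1} R`.
From `B^{n+1}` to `B⁰`, the sum is `O(|t|^{n+η})` by strong induction on `n`, the middle term is
`O(|t|^η · |t|^n)` by the Keller–Liverani estimate since `Δₙ` maps `B^{n+1}` to `B¹`, and the last
term is `O(|t|^{n+1})`.
-/

open Finset

def finCompositions (k j : ℕ) : Finset (Fin j → ℕ) :=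
  (Fintype.piFinset fun _ : Fin j => Icc 1 k).filter fun ℓ => ∑ i, ℓ i = k

lemma le_of_mem_finCompositions {k j : ℕ} {ℓ : Fin j → ℕ} (h : ℓ ∈ finCompositions k j) :
    j ≤ k := by
  simp only [finCompositions, mem_filter, Fintype.mem_piFinset, mem_Icc] at h
  calc j = ∑ _i : Fin j, 1 := by simp
    _ ≤ ∑ i, ℓ i := sum_le_sum fun i _ => (h.1 i).1
    _ = k := h.2

lemma finCompositions_zero_right {k : ℕ} (hk : k ≠ 0) : finCompositions k 0 = ∅ := by
  ext ℓ
  simp [finCompositions, hk.symm]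

lemma snoc_mem_finCompositions_iff {k j m : ℕ} {ℓ : Fin j → ℕ} :
    Fin.snoc ℓ m ∈ finCompositions k (j + 1) ↔ m ∈ Icc 1 k ∧ ℓ ∈ finCompositions (k - m) j := by
  simp only [finCompositions, mem_filter, Fintype.mem_piFinset, mem_Icc, Fin.forall_fin_succ',
    Fin.sum_univ_castSucc, Fin.snoc_castSucc, Fin.snoc_last]
  have hle : ∀ i, ℓ i ≤ ∑ i, ℓ i := fun i => single_le_sum (fun _ _ => Nat.zero_le _) (mem_univ i)
  constructor
  · rintro ⟨⟨hℓ, hm⟩, hsum⟩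
    exact ⟨hm, fun i => ⟨(hℓ i).1, by have := hle i; omega⟩, by omega⟩
  · rintro ⟨hm, hℓ, hsum⟩
    exact ⟨⟨fun i => ⟨(hℓ i).1, by have := (hℓ i).2; omega⟩, hm⟩, by omega⟩

lemma sum_finCompositions_eq_sum_snoc {M : Type*} [AddCommMonoid M]
    (G : ∀ j, (Fin j → ℕ) → M) {k : ℕ} (hk : k ≠ 0) :
    ∑ j ∈ range (k + 1), ∑ ℓ ∈ finCompositions k j, G j ℓ =
      ∑ m ∈ Icc 1 k, ∑ j ∈ range (k - m + 1), ∑ ℓ ∈ finCompositions (k - m) j,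
        G (j + 1) (Fin.snoc ℓ m) := by
  have split_last : ∀ j, ∑ ℓ ∈ finCompositions k (j + 1), G (j + 1) ℓ =
      ∑ m ∈ Icc 1 k, ∑ ℓ ∈ finCompositions (k - m) j, G (j + 1) (Fin.snoc ℓ m) := by
    intro j
    rw [sum_sigma']
    refine sum_nbij' (fun ℓ => ⟨ℓ (Fin.last j), Fin.init ℓ⟩) (fun p => Fin.snoc p.2 p.1)
      ?_ ?_ ?_ ?_ ?_
    · intro ℓ hℓ
      rw [← Fin.snoc_init_self ℓ, snoc_mem_finCompositions_iff] at hℓ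
      simpa using hℓ
    · rintro ⟨m, ℓ⟩ h
      exact snoc_mem_finCompositions_iff.2 (mem_sigma.1 h)
    · intro ℓ _
      exact Fin.snoc_init_self ℓ
    · rintro ⟨m, ℓ⟩ _
      simp
    · intro ℓ _
      simp
  have drop_long : ∀ m ∈ Icc 1 k, ∑ j ∈ range k, ∑ ℓ ∈ finCompositions (k - m) j,
      G (j + 1) (Fin.snoc ℓ m) = ∑ j ∈ range (k - m + 1), ∑ ℓ ∈ finCompositions (k - m) j,
      G (j + 1) (Fin.snoc ℓ m) := by
    intro m hm
    refine (sum_subset (range_subset_range.2 (by simp at hm; omega)) fun j _ hj => ?_).symm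
    refine sum_eq_zero fun ℓ hℓ => absurd (le_of_mem_finCompositions hℓ) ?_
    simp at hj; omega
  rw [sum_range_succ', finCompositions_zero_right hk, sum_empty, add_zero]
  simp_rw [split_last]
  rw [sum_comm]
  exact sum_congr rfl drop_long

section Algebra

variable {𝕜 A : Type*} [CommSemiring 𝕜] [Ring A] [Algebra 𝕜 A]

noncomputable def taylorCoeff (R : A) (Q : ℕ → A) (k : ℕ) : A :=
  ∑ j ∈ range (k + 1), ∑ ℓ ∈ finCompositions k j, R * (List.ofFn fun i => Q (ℓ i) * R).prod

lemma taylorCoeff_zero (R : A) (Q : ℕ → A) : taylorCoeff R Q 0 = R := by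
  simp [taylorCoeff, finCompositions]

lemma taylorCoeff_eq_sum (R : A) (Q : ℕ → A) {k : ℕ} (hk : k ≠ 0) :
    taylorCoeff R Q k = ∑ m ∈ Icc 1 k, taylorCoeff R Q (k - m) * (Q m * R) := by
  rw [taylorCoeff, sum_finCompositions_eq_sum_snoc _ hk]
  simp only [taylorCoeff, sum_mul, List.ofFn_succ', Fin.snoc_castSucc, Fin.snoc_last,
    List.concat_eq_append, List.prod_append, List.prod_cons, List.prod_nil, mul_one, mul_assoc]

noncomputable def taylorPoly (R : A) (Q : ℕ → A) (τ : 𝕜) (n : ℕ) : A :=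
  ∑ k ∈ range n, τ ^ k • taylorCoeff R Q k

lemma taylorPoly_one (R : A) (Q : ℕ → A) (τ : 𝕜) : taylorPoly R Q τ 1 = R := by
  simp [taylorPoly, taylorCoeff_zero]

lemma taylorPoly_succ (R : A) (Q : ℕ → A) (τ : 𝕜) (n : ℕ) :
    taylorPoly R Q τ (n + 1) =
      R + ∑ m ∈ Icc 1 n, τ ^ m • (taylorPoly R Q τ (n + 1 - m) * (Q m * R)) := by
  rw [taylorPoly, sum_range_succ', pow_zero, one_smul, taylorCoeff_zero, add_comm]
  congr 1
  calc ∑ k ∈ range n, τ ^ (k + 1) • taylorCoeff R Q (k + 1)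
      = ∑ k ∈ range n, ∑ m ∈ Icc 1 (k + 1),
          τ ^ (k + 1) • (taylorCoeff R Q (k + 1 - m) * (Q m * R)) := by
        simp_rw [taylorCoeff_eq_sum R Q (Nat.succ_ne_zero _), smul_sum]
    _ = ∑ m ∈ Icc 1 n, ∑ k ∈ Ico (m - 1) n,
          τ ^ (k + 1) • (taylorCoeff R Q (k + 1 - m) * (Q m * R)) :=
        sum_comm' fun k m => by simp only [mem_range, mem_Icc, mem_Ico]; omega
    _ = ∑ m ∈ Icc 1 n, τ ^ m • (taylorPoly R Q τ (n + 1 - m) * (Q m * R)) := by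
        refine sum_congr rfl fun m hm => ?_
        rw [mem_Icc] at hm
        rw [sum_Ico_eq_sum_range, taylorPoly, sum_mul, smul_sum,
          show n - (m - 1) = n + 1 - m by omega]
        refine sum_congr rfl fun i _ => ?_
        rw [show m - 1 + i + 1 = m + i by omega, Nat.add_sub_cancel_left, pow_add, mul_smul,
          smul_mul_assoc]

noncomputable def taylorRemainder (L₀ L : A) (Q : ℕ → A) (τ : 𝕜) (j : ℕ) : A :=
  L - L₀ - ∑ k ∈ Icc 1 (j - 1), τ ^ k • Q k

lemma taylorRemainder_succ (L₀ L : A) (Q : ℕ → A) (τ : 𝕜) {n : ℕ} (hn : n ≠ 0) :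
    taylorRemainder L₀ L Q τ n = τ ^ n • Q n + taylorRemainder L₀ L Q τ (n + 1) := by
  obtain ⟨n, rfl⟩ := Nat.exists_eq_succ_of_ne_zero hn
  simp only [taylorRemainder, Nat.succ_sub_one, sum_Icc_succ_top (Nat.le_add_left 1 n)]
  abel

lemma sub_eq_mul_sub_mul {x y a b : A} (hx : x * a = 1) (hy : b * y = 1) :
    x - y = x * ((b - a) * y) := by
  rw [sub_mul, mul_sub, hy, mul_one, ← mul_assoc, hx, one_mul]

lemma sub_taylorPoly_succ {R Rt L₀ L : A} {Q : ℕ → A} {τ : 𝕜}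
    (hres : Rt - R = Rt * ((L - L₀) * R)) {n : ℕ} (hn : n ≠ 0) :
    Rt - taylorPoly R Q τ (n + 1) =
      ∑ m ∈ Icc 1 (n - 1), τ ^ m • ((Rt - taylorPoly R Q τ (n + 1 - m)) * (Q m * R)) +
        (Rt - R) * (taylorRemainder L₀ L Q τ n * R) +
        R * (taylorRemainder L₀ L Q τ (n + 1) * R) := by
  have hRt : Rt - R = ∑ m ∈ Icc 1 (n - 1), τ ^ m • (Rt * (Q m * R)) +
      (Rt - R) * (taylorRemainder L₀ L Q τ n * R) + R * (taylorRemainder L₀ L Q τ n * R) := by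
    have hL : L - L₀ = ∑ m ∈ Icc 1 (n - 1), τ ^ m • Q m + taylorRemainder L₀ L Q τ n :=
      (add_sub_cancel _ _).symm
    conv_lhs => rw [hres, hL]
    simp only [add_mul, mul_add, sub_mul, sum_mul, mul_sum, smul_mul_assoc, mul_smul_comm]
    abel
  have hP : taylorPoly R Q τ (n + 1) - R = ∑ m ∈ Icc 1 (n - 1),
      τ ^ m • (taylorPoly R Q τ (n + 1 - m) * (Q m * R)) + τ ^ n • (R * (Q n * R)) := by
    obtain ⟨n, rfl⟩ := Nat.exists_eq_succ_of_ne_zero hn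
    rw [taylorPoly_succ, add_sub_cancel_left, sum_Icc_succ_top (Nat.le_add_left 1 n),
      Nat.add_sub_cancel_left, taylorPoly_one, Nat.succ_sub_one]
  calc Rt - taylorPoly R Q τ (n + 1) = (Rt - R) - (taylorPoly R Q τ (n + 1) - R) := by abel
    _ = _ := by
      conv_lhs => rw [hRt, hP]
      rw [taylorRemainder_succ L₀ L Q τ hn]
      simp only [sub_mul, smul_sub, sum_sub_distrib, add_mul, mul_add, smul_mul_assoc,
        mul_smul_comm]
      abel

end Algebra

section Scale

variable {𝕜 X : Type*} [NormedField 𝕜] [AddCommGroup X] [Module 𝕜 X] (N : ℕ → Seminorm 𝕜 X)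

def ScaleBound (T : X →ₗ[𝕜] X) (i j : ℕ) (c : ℝ) : Prop :=
  ∀ f, N j (T f) ≤ c * N i f

variable {N}

namespace ScaleBound

variable {T S : X →ₗ[𝕜] X} {i j k : ℕ} {a b : ℝ}

lemma mono (h : ScaleBound N T i j a) (hab : a ≤ b) : ScaleBound N T i j b := fun f =>
  (h f).trans (mul_le_mul_of_nonneg_right hab (apply_nonneg _ _))

lemma comp (hT : ScaleBound N T j k a) (hS : ScaleBound N S i j b) (ha : 0 ≤ a) :
    ScaleBound N (T * S) i k (a * b) := fun f =>
  calc N k (T (S f)) ≤ a * N j (S f) := hT _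
    _ ≤ a * (b * N i f) := mul_le_mul_of_nonneg_left (hS f) ha
    _ = a * b * N i f := (mul_assoc _ _ _).symm

lemma add (hT : ScaleBound N T i j a) (hS : ScaleBound N S i j b) :
    ScaleBound N (T + S) i j (a + b) := fun f =>
  (map_add_le_add _ _ _).trans ((add_le_add (hT f) (hS f)).trans_eq (add_mul _ _ _).symm)

lemma smul (h : ScaleBound N T i j a) (τ : 𝕜) : ScaleBound N (τ • T) i j (‖τ‖ * a) := fun f => by
  rw [LinearMap.smul_apply, map_smul_eq_mul, mul_assoc]
  exact mul_le_mul_of_nonneg_left (h f) (norm_nonneg τ)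

lemma sum {ι : Type*} {s : Finset ι} {T : ι → X →ₗ[𝕜] X}
    (h : ∀ m ∈ s, ScaleBound N (T m) i j a) : ScaleBound N (∑ m ∈ s, T m) i j (#s * a) := by
  induction s using Finset.cons_induction with
  | empty => intro f; simp
  | cons m s hm ih =>
    rw [sum_cons, card_cons, Nat.cast_succ, add_comm _ (1 : ℝ), add_mul, one_mul]
    exact (h m (mem_cons_self m s)).add (ih fun m' hm' => h m' (mem_cons_of_mem hm'))

end ScaleBound

def taylorErrorConst (s : ℕ) (c : ℝ) : ℝ := (s + 2) * c ^ 3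

lemma one_le_taylorErrorConst (s : ℕ) {c : ℝ} (hc : 1 ≤ c) : 1 ≤ taylorErrorConst s c :=
  one_le_mul_of_one_le_of_one_le (by linarith [(Nat.cast_nonneg s : (0 : ℝ) ≤ s)])
    (one_le_pow₀ hc)

lemma le_taylorErrorConst (s : ℕ) {c : ℝ} (hc : 1 ≤ c) : c ≤ taylorErrorConst s c :=
  calc c = c ^ 1 := (pow_one c).symm
    _ ≤ c ^ 3 := pow_le_pow_right₀ hc (by norm_num)
    _ ≤ (s + 2) * c ^ 3 :=
      le_mul_of_one_le_left (by positivity) (by linarith [(Nat.cast_nonneg s : (0 : ℝ) ≤ s)])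

lemma card_mul_add_le_taylorErrorConst_pow_succ {s k : ℕ} {c : ℝ} (hc : 1 ≤ c) (hk : k ≤ s)
    (n : ℕ) : k * (taylorErrorConst s c ^ n * c ^ 2) + c ^ 3 + c ^ 3 ≤
      taylorErrorConst s c ^ (n + 1) := by
  have hB := one_le_taylorErrorConst s hc
  have hB₀ : 0 ≤ taylorErrorConst s c := zero_le_one.trans hB
  have hc₂ : c ^ 2 ≤ c ^ 3 := pow_le_pow_right₀ hc (by norm_num)
  have hc₃ : c ^ 3 ≤ c ^ 3 * taylorErrorConst s c ^ n :=
    le_mul_of_one_le_right (by positivity) (one_le_pow₀ hB)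
  calc (k : ℝ) * (taylorErrorConst s c ^ n * c ^ 2) + c ^ 3 + c ^ 3
      ≤ s * (taylorErrorConst s c ^ n * c ^ 3) + c ^ 3 * taylorErrorConst s c ^ n +
          c ^ 3 * taylorErrorConst s c ^ n := by gcongr
    _ = taylorErrorConst s c ^ (n + 1) := by rw [pow_succ, taylorErrorConst]; ring

variable {s : ℕ} {Q : ℕ → X →ₗ[𝕜] X} {L₀ L R Rt : X →ₗ[𝕜] X} {τ : 𝕜} {r c η : ℝ}

lemma scaleBound_sub_taylorPoly_succ (hτ : ‖τ‖ ≤ r) (hr : r ≤ 1) (hc : 1 ≤ c) (hη₀ : 0 ≤ η)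
    (hη₁ : η ≤ 1) (hres : Rt - R = Rt * ((L - L₀) * R))
    (hR : ∀ k ≤ s, ScaleBound N R k k c)
    (hQ : ∀ j, 1 ≤ j → j ≤ s - 1 → ∀ i, j ≤ i → i ≤ s → ScaleBound N (Q j) i (i - j) c)
    (hΔ : ∀ j, 1 ≤ j → j ≤ s → ∀ i, j ≤ i → i ≤ s →
      ScaleBound N (taylorRemainder L₀ L Q τ j) i (i - j) (c * r ^ j))
    (hKL : ScaleBound N (Rt - R) 1 0 (c * r ^ η)) {n : ℕ} (hn : n ≠ 0) (hns : n + 1 ≤ s)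
    (ih : ∀ m, 1 ≤ m → m ≤ n → ScaleBound N (Rt - taylorPoly R Q τ m) m 0
      (taylorErrorConst s c ^ m * (r ^ (m - 1) * r ^ η))) :
    ScaleBound N (Rt - taylorPoly R Q τ (n + 1)) (n + 1) 0
      (taylorErrorConst s c ^ (n + 1) * (r ^ n * r ^ η)) := by
  set B := taylorErrorConst s c
  have hB : 1 ≤ B := one_le_taylorErrorConst s hc
  have hB₀ : 0 ≤ B := zero_le_one.trans hB
  have hr₀ : 0 ≤ r := (norm_nonneg τ).trans hτ
  have hc₀ : 0 ≤ c := zero_le_one.trans hc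
  have hRn := hR (n + 1) hns
  have hterm : ∀ m ∈ Icc 1 (n - 1),
      ScaleBound N (τ ^ m • ((Rt - taylorPoly R Q τ (n + 1 - m)) * (Q m * R))) (n + 1) 0
        (B ^ n * c ^ 2 * (r ^ n * r ^ η)) := by
    intro m hm
    rw [mem_Icc] at hm
    have hQR := (hQ m hm.1 (by omega) (n + 1) (by omega) hns).comp hRn hc₀
    refine (((ih (n + 1 - m) (by omega) (by omega)).comp hQR (by positivity)).smul _).mono ?_
    calc ‖τ ^ m‖ * (B ^ (n + 1 - m) * (r ^ (n + 1 - m - 1) * r ^ η) * (c * c))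
        ≤ r ^ m * (B ^ n * (r ^ (n - m) * r ^ η) * (c * c)) := by
          rw [norm_pow, show n + 1 - m - 1 = n - m by omega]
          gcongr
          omega
      _ = B ^ n * c ^ 2 * (r ^ n * r ^ η) := by
          rw [← pow_mul_pow_sub r (show m ≤ n by omega)]
          ring
  have hKL' : ScaleBound N ((Rt - R) * (taylorRemainder L₀ L Q τ n * R)) (n + 1) 0
      (c ^ 3 * (r ^ n * r ^ η)) := by
    have h := hΔ n (by omega) (by omega) (n + 1) (by omega) hns
    rw [Nat.add_sub_cancel_left] at h
    refine (hKL.comp (h.comp hRn (by positivity)) (by positivity)).mono (le_of_eq ?_)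
    ring
  have hlast : ScaleBound N (R * (taylorRemainder L₀ L Q τ (n + 1) * R)) (n + 1) 0
      (c ^ 3 * (r ^ n * r ^ η)) := by
    have h := hΔ (n + 1) (by omega) hns (n + 1) le_rfl hns
    rw [Nat.sub_self] at h
    refine ((hR 0 (Nat.zero_le s)).comp (h.comp hRn (by positivity)) hc₀).mono ?_
    have hr_le : r ≤ r ^ η := by
      simpa using Real.rpow_le_rpow_of_exponent_ge' hr₀ hr hη₀ hη₁
    calc c * (c * r ^ (n + 1) * c) = c ^ 3 * (r ^ n * r) := by ring
      _ ≤ c ^ 3 * (r ^ n * r ^ η) := by gcongr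
  rw [sub_taylorPoly_succ hres hn]
  refine (((ScaleBound.sum hterm).add hKL').add hlast).mono ?_
  have hcard : #(Icc 1 (n - 1)) ≤ s := by
    rw [Nat.card_Icc]; omega
  calc _ = ((#(Icc 1 (n - 1)) : ℝ) * (B ^ n * c ^ 2) + c ^ 3 + c ^ 3) * (r ^ n * r ^ η) := by
        ring
    _ ≤ _ := mul_le_mul_of_nonneg_right
        (card_mul_add_le_taylorErrorConst_pow_succ hc hcard n) (by positivity)

lemma scaleBound_sub_taylorPoly (hτ : ‖τ‖ ≤ r) (hr : r ≤ 1) (hc : 1 ≤ c) (hη₀ : 0 ≤ η)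
    (hη₁ : η ≤ 1) (hres : Rt - R = Rt * ((L - L₀) * R))
    (hR : ∀ k ≤ s, ScaleBound N R k k c)
    (hQ : ∀ j, 1 ≤ j → j ≤ s - 1 → ∀ i, j ≤ i → i ≤ s → ScaleBound N (Q j) i (i - j) c)
    (hΔ : ∀ j, 1 ≤ j → j ≤ s → ∀ i, j ≤ i → i ≤ s →
      ScaleBound N (taylorRemainder L₀ L Q τ j) i (i - j) (c * r ^ j))
    (hKL : ScaleBound N (Rt - R) 1 0 (c * r ^ η)) {n : ℕ} (hn : 1 ≤ n) (hns : n ≤ s) :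
    ScaleBound N (Rt - taylorPoly R Q τ n) n 0
      (taylorErrorConst s c ^ n * (r ^ (n - 1) * r ^ η)) := by
  induction n using Nat.strong_induction_on with
  | _ n ih =>
    obtain rfl | ⟨n, rfl, hn₀⟩ : n = 1 ∨ ∃ k, n = k + 1 ∧ k ≠ 0 :=
      (eq_or_ne n 1).imp_right fun h => ⟨n - 1, by omega, by omega⟩
    · rw [taylorPoly_one]
      have hr₀ : 0 ≤ r := (norm_nonneg τ).trans hτ
      refine hKL.mono ?_
      simpa using mul_le_mul_of_nonneg_right (le_taylorErrorConst s hc) (by positivity : 0 ≤ r ^ η)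
    · exact scaleBound_sub_taylorPoly_succ hτ hr hc hη₀ hη₁ hres hR hQ hΔ hKL hn₀ hns
        fun m hm hmn => ih m (by omega) hm (by omega)

end Scale

lemma log_div_log_mem_Ioc {α ϱ M : ℝ} (hα : 0 < α) (hαϱ : α < ϱ) (hϱM : ϱ ≤ M) :
    Real.log (ϱ / α) / Real.log (M / α) ∈ Set.Ioc 0 1 := by
  have hϱ : 0 < Real.log (ϱ / α) := Real.log_pos ((one_lt_div hα).2 hαϱ)
  have hM : 0 < Real.log (M / α) := Real.log_pos ((one_lt_div hα).2 (hαϱ.trans_le hϱM))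
  refine ⟨div_pos hϱ hM, (div_le_one hM).2 ?_⟩
  exact Real.log_le_log (div_pos (hα.trans hαϱ) hα) (div_le_div_of_nonneg_right hϱM hα.le)

theorem stmt11_general {X : Type*} [AddCommGroup X] [Module ℂ X]
    (s : ℕ) (hs : 1 ≤ s)
    (N : ℕ → Seminorm ℂ X)
    (L : ℝ → X →ₗ[ℂ] X) (Q : ℕ → X →ₗ[ℂ] X)
    (I : Set ℝ)
    (C M α ϱ K : ℝ) (z : ℂ)
    (hα : 0 < α) (hαϱ : α < ϱ) (hϱM : ϱ < M)
    (hQ : ∀ j, 1 ≤ j → j ≤ s - 1 → ∀ i, j ≤ i → i ≤ s → ∀ f,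
      N (i - j) (Q j f) ≤ C * N i f)
    (hΔ : ∀ t ∈ I, ∀ j, 1 ≤ j → j ≤ s → ∀ i, j ≤ i → i ≤ s → ∀ f,
      N (i - j) ((L t - L 0 - ∑ k ∈ Finset.Icc 1 (j - 1), (t : ℂ) ^ k • Q k) f)
        ≤ C * |t| ^ j * N i f)
    (R : X →ₗ[ℂ] X) (Rt : ℝ → X →ₗ[ℂ] X)
    (hR' : (z • (1 : X →ₗ[ℂ] X) - L 0) * R = 1)
    (hRt : ∀ t ∈ I, Rt t * (z • (1 : X →ₗ[ℂ] X) - L t) = 1 ∧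
      (z • (1 : X →ₗ[ℂ] X) - L t) * Rt t = 1)
    (hRbound : ∀ k ≤ s, ∀ f, N k (R f) ≤ K * N k f)
    (hKL : ∀ t ∈ I, ∀ f,
      N 0 ((Rt t - R) f)
        ≤ C * |t| ^ (Real.log (ϱ / α) / Real.log (M / α)) * N 1 f) :
    ∃ C' > 0, ∃ t₀ > 0, ∀ t ∈ I, |t| ≤ t₀ → ∀ f : X,
      N 0 ((Rt t
        - ∑ k ∈ Finset.range s, (t : ℂ) ^ k •
            ∑ j ∈ Finset.range (k + 1),
              ∑ ℓ ∈ (Fintype.piFinset fun _ : Fin j => Finset.Icc 1 k) |>.filter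
                  (fun ℓ => ∑ i, ℓ i = k),
                R * (List.ofFn fun i => Q (ℓ i) * R).prod) f)
        ≤ C' * |t| ^ ((s : ℝ) - 1 + Real.log (ϱ / α) / Real.log (M / α)) * N s f := by
  set η := Real.log (ϱ / α) / Real.log (M / α)
  obtain ⟨hη₀, hη₁⟩ := log_div_log_mem_Ioc hα hαϱ hϱM.le
  set c := max (max C K) 1
  have hc : 1 ≤ c := le_max_right _ 1
  have hCc : C ≤ c := le_max_of_le_left (le_max_left C K)
  have hKc : K ≤ c := le_max_of_le_left (le_max_right C K)
  refine ⟨taylorErrorConst s c ^ s, pow_pos (one_pos.trans_le (one_le_taylorErrorConst s hc)) s,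
    1, one_pos, fun t ht ht₁ f => ?_⟩
  have hres : Rt t - R = Rt t * ((L t - L 0) * R) := by
    rw [sub_eq_mul_sub_mul (hRt t ht).1 hR', sub_sub_sub_cancel_left]
  have hbound : ScaleBound N (Rt t - taylorPoly R Q (t : ℂ) s) s 0
      (taylorErrorConst s c ^ s * (|t| ^ (s - 1) * |t| ^ η)) :=
    scaleBound_sub_taylorPoly (by simp) ht₁ hc hη₀.le hη₁ hres
      (fun k hk => ScaleBound.mono (hRbound k hk) hKc)
      (fun j h₁ h₂ i h₃ h₄ => ScaleBound.mono (hQ j h₁ h₂ i h₃ h₄) hCc)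
      (fun j h₁ h₂ i h₃ h₄ => ScaleBound.mono (hΔ t ht j h₁ h₂ i h₃ h₄) (by gcongr))
      (ScaleBound.mono (hKL t ht) (by gcongr)) hs le_rfl
  have hexp : |t| ^ ((s : ℝ) - 1 + η) = |t| ^ (s - 1) * |t| ^ η := by
    rw [show (s : ℝ) - 1 + η = η + (s - 1 : ℕ) by push_cast [hs]; ring,
      Real.rpow_add_natCast' (abs_nonneg t) (by positivity), mul_comm]
  rw [hexp]
  exact hbound f

/-- Abstract perturbation theorem (Theorem 7 of the paper). A scale of Banach
spaces `B⁰ ⊇ B¹ ⊇ … ⊇ B^s` is modeled by a single vector space `X` endowed with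
an increasing family of seminorms `N 0 ≤ N 1 ≤ … ≤ N s`. Given a family of
operators `L t` satisfying uniform power bounds (a), a Lasota–Yorke inequality
(b), Taylor coefficients `Q j` bounded from `B^i` to `B^{i−j}` (c), Taylor
remainders `Δ_j(t) = L_t − L_0 − Σ_{k<j} t^k Q_k` of size `|t|^j` from `B^i` to
`B^{i−j}` (d), a resolvent `R = (z−L_0)⁻¹` uniformly bounded on every level of
the scale, resolvents `Rt t = (z−L_t)⁻¹`, and the Keller–Liverani estimate
`‖(z−L_t)⁻¹ − (z−L_0)⁻¹‖_{B¹→B⁰} ≤ C|t|^η` with `η = log(ϱ/α)/log(M/α)`, the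
resolvent of `L_t` is approximated in `‖·‖_{B^s→B⁰}` by the Taylor polynomial
`R_s(t) = Σ_{k<s} t^k Σ_{ℓ₁+⋯+ℓ_j=k} R Q_{ℓ₁} R ⋯ Q_{ℓ_j} R` up to an error
`C'|t|^{s−1+η}`. -/
theorem stmt11 {X : Type*} [AddCommGroup X] [Module ℂ X]
    (s : ℕ) (hs : 1 ≤ s)
    (N : ℕ → Seminorm ℂ X)
    (L : ℝ → X →ₗ[ℂ] X) (Q : ℕ → X →ₗ[ℂ] X)
    (I : Set ℝ) (hI : I ∈ nhds (0 : ℝ))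
    (C M α ϱ K : ℝ) (z : ℂ)
    (hC : 0 < C) (hα : 0 < α) (hαϱ : α < ϱ) (hϱM : ϱ < M)
    (hmono : ∀ i < s, ∀ f, N i f ≤ N (i + 1) f)
    (ha : ∀ t ∈ I, ∀ (n : ℕ) (f : X), N 0 (((L t) ^ n) f) ≤ C * M ^ n * N 0 f)
    (hb : ∀ t ∈ I, ∀ (n : ℕ) (f : X),
      N 1 (((L t) ^ n) f) ≤ C * α ^ n * N 1 f + C * M ^ n * N 0 f)
    (hQ : ∀ j, 1 ≤ j → j ≤ s - 1 → ∀ i, j ≤ i → i ≤ s → ∀ f,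
      N (i - j) (Q j f) ≤ C * N i f)
    (hΔ : ∀ t ∈ I, ∀ j, 1 ≤ j → j ≤ s → ∀ i, j ≤ i → i ≤ s → ∀ f,
      N (i - j) ((L t - L 0 - ∑ k ∈ Finset.Icc 1 (j - 1), (t : ℂ) ^ k • Q k) f)
        ≤ C * |t| ^ j * N i f)
    (R : X →ₗ[ℂ] X) (Rt : ℝ → X →ₗ[ℂ] X)
    (hR : R * (z • (1 : X →ₗ[ℂ] X) - L 0) = 1)
    (hR' : (z • (1 : X →ₗ[ℂ] X) - L 0) * R = 1)
    (hRt : ∀ t ∈ I, Rt t * (z • (1 : X →ₗ[ℂ] X) - L t) = 1 ∧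
      (z • (1 : X →ₗ[ℂ] X) - L t) * Rt t = 1)
    (hRbound : ∀ k ≤ s, ∀ f, N k (R f) ≤ K * N k f)
    (hKL : ∀ t ∈ I, ∀ f,
      N 0 ((Rt t - R) f)
        ≤ C * |t| ^ (Real.log (ϱ / α) / Real.log (M / α)) * N 1 f) :
    ∃ C' > 0, ∃ t₀ > 0, ∀ t ∈ I, |t| ≤ t₀ → ∀ f : X,
      N 0 ((Rt t
        - ∑ k ∈ Finset.range s, (t : ℂ) ^ k •
            ∑ j ∈ Finset.range (k + 1),
              ∑ ℓ ∈ (Fintype.piFinset fun _ : Fin j => Finset.Icc 1 k) |>.filter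
                  (fun ℓ => ∑ i, ℓ i = k),
                R * (List.ofFn fun i => Q (ℓ i) * R).prod) f)
        ≤ C' * |t| ^ ((s : ℝ) - 1 + Real.log (ϱ / α) / Real.log (M / α)) * N s f :=
  stmt11_general s hs N L Q I C M α ϱ K z hα hαϱ hϱM hQ hΔ R Rt hR' hRt hRbound hKL
end

section
/- Quasi-compactness from Lasota–Yorke plus compactness: let B, B_w be Banach spaces with a compact linear map ι: B → B_w that is injective, and L a bounded operator on B with ‖Lⁿ f‖_B ≤ C σⁿ ‖f‖_B + C ‖ι f‖_{B_w} for all n (where ι intertwines L with a bounded operator on B_w, and 0 < σ < 1). Then the essential spectral radius of L on B is at most σ. -/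
/-! Compactness of `ι` lets one pick finitely many `g` in the unit ball that are `δ`-dense in the
`ι`-distance. For `‖f‖ ≤ 1` and the nearest such `g`, the Lasota–Yorke inequality applied to
`f - g` gives `‖Lⁿ f - Lⁿ g‖ ≤ 2Cσⁿ + Cδ`, which is `≤ ρⁿ` once `n` is large and `δ` small. -/

open Metric Set Filter

theorem TotallyBounded.exists_finite_subset_forall_dist_lt {α β : Type*} [PseudoMetricSpace β]
    {f : α → β} {s : Set α} (hs : TotallyBounded (f '' s)) {δ : ℝ} (hδ : 0 < δ) :
    ∃ t ⊆ s, t.Finite ∧ ∀ x ∈ s, ∃ y ∈ t, dist (f x) (f y) < δ := by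
  obtain ⟨t, hts, htf, hcover⟩ :=
    exists_subset_image_finite_and.1 (finite_approx_of_totallyBounded hs δ hδ)
  refine ⟨t, hts, htf, fun x hx => ?_⟩
  obtain ⟨-, ⟨y, hy, rfl⟩, hxy⟩ := mem_iUnion₂.1 (hcover (mem_image_of_mem f hx))
  exact ⟨y, hy, hxy⟩

theorem IsCompactOperator.totallyBounded_image_closedBall {𝕜 E F : Type*}
    [NontriviallyNormedField 𝕜] [SeminormedAddCommGroup E] [NormedSpace 𝕜 E]
    [SeminormedAddCommGroup F] [NormedSpace 𝕜 F] {ι : E →L[𝕜] F} (hι : IsCompactOperator ι)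
    (r : ℝ) : TotallyBounded (ι '' closedBall 0 r) := by
  obtain ⟨K, hK, hsub⟩ := hι.image_closedBall_subset_compact (f := (ι : E →ₗ[𝕜] F)) r
  exact hK.totallyBounded.subset hsub

theorem exists_finset_image_closedBall_subset_of_norm_le {𝕜 E F G : Type*}
    [NontriviallyNormedField 𝕜] [SeminormedAddCommGroup E] [NormedSpace 𝕜 E]
    [SeminormedAddCommGroup F] [NormedSpace 𝕜 F] [SeminormedAddCommGroup G] [NormedSpace 𝕜 G]
    {ι : E →L[𝕜] F} (hι : IsCompactOperator ι) (T : E →L[𝕜] G) {a b : ℝ} (ha : 0 ≤ a)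
    (hb : 0 ≤ b) (hT : ∀ f, ‖T f‖ ≤ a * ‖f‖ + b * ‖ι f‖) (r : ℝ) {ε : ℝ} (hε : 0 < ε) :
    ∃ S : Finset G, T '' closedBall 0 r ⊆ ⋃ c ∈ S, closedBall c (2 * a * r + ε) := by
  classical
  set δ := ε / (b + 1)
  have hbδ : b * δ < ε := by
    rw [mul_div_assoc', div_lt_iff₀ (by linarith)]
    nlinarith
  obtain ⟨t, hts, htf, hnear⟩ :=
    (hι.totallyBounded_image_closedBall r).exists_finite_subset_forall_dist_lt
      (div_pos hε (by linarith : 0 < b + 1))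
  refine ⟨htf.toFinset.image T, ?_⟩
  rintro - ⟨f, hf, rfl⟩
  obtain ⟨g, hgt, hfg⟩ := hnear f hf
  refine mem_iUnion₂.2 ⟨T g, Finset.mem_image_of_mem T (htf.mem_toFinset.2 hgt), ?_⟩
  have hfg_norm : ‖f - g‖ ≤ 2 * r := by
    linarith [norm_sub_le f g, mem_closedBall_zero_iff.1 hf, mem_closedBall_zero_iff.1 (hts hgt)]
  have hιfg : ‖ι (f - g)‖ ≤ δ := by
    rw [map_sub, ← dist_eq_norm]
    exact hfg.le
  rw [mem_closedBall, dist_eq_norm, ← map_sub]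
  calc ‖T (f - g)‖ ≤ a * ‖f - g‖ + b * ‖ι (f - g)‖ := hT (f - g)
    _ ≤ a * (2 * r) + b * δ := by gcongr
    _ ≤ 2 * a * r + ε := by linarith

theorem exists_pos_mul_pow_lt_pow {σ ρ : ℝ} (hσ : 0 ≤ σ) (hσρ : σ < ρ) (K : ℝ) :
    ∃ n : ℕ, 0 < n ∧ K * σ ^ n < ρ ^ n := by
  have hρ : 0 < ρ := hσ.trans_lt hσρ
  have hlim : Tendsto (fun n : ℕ => K * (σ / ρ) ^ n) atTop (nhds 0) := by
    simpa using (tendsto_pow_atTop_nhds_zero_of_lt_one (div_nonneg hσ hρ.le)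
      ((div_lt_one hρ).2 hσρ)).const_mul K
  obtain ⟨n, hn, hsmall⟩ :=
    ((eventually_gt_atTop 0).and (hlim.eventually_lt_const one_pos)).exists
  refine ⟨n, hn, ?_⟩
  have hρn : 0 < ρ ^ n := pow_pos hρ n
  calc K * σ ^ n = K * (σ / ρ) ^ n * ρ ^ n := by rw [div_pow]; field_simp
    _ < 1 * ρ ^ n := by gcongr
    _ = ρ ^ n := one_mul _

theorem stmt16_general {B Bw : Type*} [NormedAddCommGroup B] [NormedSpace ℂ B]
    [NormedAddCommGroup Bw] [NormedSpace ℂ Bw]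
    (ι : B →L[ℂ] Bw) (hcomp : IsCompactOperator ι)
    (L : B →L[ℂ] B)
    (C σ : ℝ) (hC : 0 < C) (hσ0 : 0 < σ)
    (hLY : ∀ (n : ℕ) (f : B), ‖(L ^ n) f‖ ≤ C * σ ^ n * ‖f‖ + C * ‖ι f‖) :
    ∀ ρ : ℝ, σ < ρ → ∃ n : ℕ, 0 < n ∧ ∃ F : Finset B,
      (L ^ n) '' Metric.closedBall 0 1 ⊆ ⋃ c ∈ F, Metric.closedBall c (ρ ^ n) := by
  intro ρ hρ
  obtain ⟨n, hn, hσρ⟩ := exists_pos_mul_pow_lt_pow hσ0.le hρ (4 * C)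
  have hρn : 0 < ρ ^ n := pow_pos (hσ0.trans hρ) n
  obtain ⟨F, hF⟩ := exists_finset_image_closedBall_subset_of_norm_le hcomp (L ^ n)
    (by positivity) hC.le (hLY n) 1 (half_pos hρn)
  refine ⟨n, hn, F, hF.trans (iUnion₂_mono fun _ _ => closedBall_subset_closedBall ?_)⟩
  linarith

/-- Hennion's theorem (quasi-compactness from a Lasota–Yorke inequality plus
compactness of the embedding in a weak space): if `ι : B → B_w` is an injective
compact embedding intertwining `L` with a bounded operator `L_w`, and
`‖Lⁿf‖ ≤ Cσⁿ‖f‖ + C‖ιf‖` with `0 < σ < 1`, then the essential spectral radius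
of `L` on `B` is at most `σ`, expressed via Nussbaum's formula: for every
`ρ > σ` there is `n` such that the image of the unit ball under `Lⁿ` can be
covered by finitely many balls of radius `ρⁿ`. -/
theorem stmt16 {B Bw : Type*} [NormedAddCommGroup B] [NormedSpace ℂ B]
    [NormedAddCommGroup Bw] [NormedSpace ℂ Bw]
    (ι : B →L[ℂ] Bw) (hinj : Function.Injective ι) (hcomp : IsCompactOperator ι)
    (L : B →L[ℂ] B) (Lw : Bw →L[ℂ] Bw) (hcomm : ∀ f, ι (L f) = Lw (ι f))
    (C σ : ℝ) (hC : 0 < C) (hσ0 : 0 < σ) (hσ1 : σ < 1)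
    (hLY : ∀ (n : ℕ) (f : B), ‖(L ^ n) f‖ ≤ C * σ ^ n * ‖f‖ + C * ‖ι f‖) :
    ∀ ρ : ℝ, σ < ρ → ∃ n : ℕ, 0 < n ∧ ∃ F : Finset B,
      (L ^ n) '' Metric.closedBall 0 1 ⊆ ⋃ c ∈ F, Metric.closedBall c (ρ ^ n) :=
  stmt16_general ι hcomp L C σ hC hσ0 hLY
end
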